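/- arXiv:2209.05659 — 2 statements merged into one kernel-verified Lean document; each statement's English description precedes it below -/
import Mathlib

section
/- A cohesive set is Π⁰₁-immune if and only if it is not co-c.e. (not Π⁰₁). -/
/-!
If `C` is cohesive and `(W e)ᶜ ⊆ C` is infinite, cohesiveness forces `W e ∩ C` to be finite,
so `C = (W e)ᶜ ∪ (W e ∩ C)` is the complement of the c.e. set `W e \ (W e ∩ C)`.
Conversely a `Π⁰₁`-immune set cannot be `Π⁰₁`, being an infinite `Π⁰₁` subset of itself.
-/

namespace Thesis

/-- The `e`-th c.e. set. -/
def W (e : ℕ) : Set ℕ := {n | ((Denumerable.ofNat Nat.Partrec.Code e).eval n).Dom}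

/-- `C` is cohesive: it is infinite and no c.e. set splits it into two infinite pieces. -/
def Cohesive (C : Set ℕ) : Prop :=
  C.Infinite ∧ ∀ e : ℕ, (W e ∩ C).Finite ∨ ((W e)ᶜ ∩ C).Finite

/-- `S` is `Π⁰₁`-immune: it is infinite and contains no infinite co-c.e. subset. -/
def Pi01Immune (S : Set ℕ) : Prop :=
  S.Infinite ∧ ∀ e : ℕ, (W e)ᶜ ⊆ S → ((W e)ᶜ).Finite

/-- `C` is a `Π⁰₁` (co-c.e.) set. -/
def IsPi01 (C : Set ℕ) : Prop := ∃ e : ℕ, C = (W e)ᶜ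

theorem primrecPred_mem_finset {α : Type*} [Primcodable α] [DecidableEq α] (F : Finset α) :
    PrimrecPred (· ∈ F) :=
  (PrimrecRel.exists_mem_list Primrec.eq).comp (Primrec.const F.toList) Primrec.id
    |>.of_eq fun n => by simp

theorem exists_W_eq_diff_finset (e : ℕ) (F : Finset ℕ) : ∃ d : ℕ, W d = W e \ F := by
  set c := Denumerable.ofNat Nat.Partrec.Code e with hc
  have hc_partrec : Partrec c.eval :=
    Partrec.nat_iff.mpr (Nat.Partrec.Code.exists_code.mpr ⟨c, rfl⟩)
  have hdiff : Partrec fun n => cond (decide (n ∈ F)) Part.none (c.eval n) :=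
    Partrec.cond (primrecPred_mem_finset F).decide.to_comp Partrec.none hc_partrec
  obtain ⟨d, hd⟩ := Nat.Partrec.Code.exists_code.mp (Partrec.nat_iff.mp hdiff)
  refine ⟨Encodable.encode d, Set.ext fun n => ?_⟩
  by_cases hn : n ∈ F <;> simp [W, hd, ← hc, hn]

theorem IsPi01.union_finite {S F : Set ℕ} (hS : IsPi01 S) (hF : F.Finite) : IsPi01 (S ∪ F) := by
  obtain ⟨e, rfl⟩ := hS
  obtain ⟨d, hd⟩ := exists_W_eq_diff_finset e hF.toFinset
  exact ⟨d, by rw [hd, Set.sdiff_eq, Set.compl_inter, compl_compl, Set.Finite.coe_toFinset]⟩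

theorem Pi01Immune.not_isPi01 {S : Set ℕ} (hS : Pi01Immune S) : ¬ IsPi01 S := by
  rintro ⟨e, rfl⟩
  exact hS.1 (hS.2 e subset_rfl)

theorem Cohesive.pi01Immune_of_not_isPi01 {C : Set ℕ} (hC : Cohesive C) (hC' : ¬ IsPi01 C) :
    Pi01Immune C := by
  refine ⟨hC.1, fun e hsub => by_contra fun hinf => hC' ?_⟩
  have hfin : (W e ∩ C).Finite :=
    (hC.2 e).resolve_right (by rwa [Set.inter_eq_left.mpr hsub])
  have hsplit : (W e)ᶜ ∪ (W e ∩ C) = C := by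
    rw [Set.union_inter_distrib_left, Set.compl_union_self, Set.univ_inter,
      Set.union_eq_right.mpr hsub]
  exact hsplit ▸ IsPi01.union_finite ⟨e, rfl⟩ hfin

/-- A cohesive set is `Π⁰₁`-immune iff it is not co-c.e. -/
theorem cohesive_pi01immune_iff_not_pi01 (C : Set ℕ) (hC : Cohesive C) :
    Pi01Immune C ↔ ¬ IsPi01 C :=
  ⟨Pi01Immune.not_isPi01, hC.pi01Immune_of_not_isPi01⟩

end Thesis
end

section
/- Every cohesive set C has a Π⁰₁-immune subset D with D ≡_T C. -/
open Classical in
noncomputable def chi (A : Set ℕ) : ℕ →. ℕ := fun n => Part.some (if n ∈ A then 1 else 0)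

/-- Functions partial recursive in an oracle `O`. -/
inductive RecursiveInOracle (O : ℕ →. ℕ) : (ℕ →. ℕ) → Prop
  | zero : RecursiveInOracle O (pure 0)
  | succ : RecursiveInOracle O (fun n => Part.some (n + 1))
  | left : RecursiveInOracle O (fun n => Part.some n.unpair.1)
  | right : RecursiveInOracle O (fun n => Part.some n.unpair.2)
  | oracle : RecursiveInOracle O O
  | pair {f g} : RecursiveInOracle O f → RecursiveInOracle O g →
      RecursiveInOracle O fun n => Nat.pair <$> f n <*> g n
  | comp {f g} : RecursiveInOracle O f → RecursiveInOracle O g →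
      RecursiveInOracle O fun n => g n >>= f
  | prec {f g} : RecursiveInOracle O f → RecursiveInOracle O g →
      RecursiveInOracle O (Nat.unpaired fun a n =>
        n.rec (f a) fun y IH => do let i ← IH; g (Nat.pair a (Nat.pair y i)))
  | rfind {f} : RecursiveInOracle O f →
      RecursiveInOracle O fun a => Nat.rfind fun n => (fun m => m = 0) <$> f (Nat.pair a n)

/-- `A` is Turing reducible to `B`. -/
def TuringRed (A B : Set ℕ) : Prop := RecursiveInOracle (chi B) (chi A)

/-- A total function computable from the oracle `O`. -/
def ComputableInOracle (O : ℕ →. ℕ) (f : ℕ → ℕ) : Prop := RecursiveInOracle O fun n => Part.some (f n)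

/-- `S` is computably enumerable in the oracle `O`. -/
def CeIn (O : ℕ →. ℕ) (S : Set ℕ) : Prop :=
  ∃ f : ℕ →. ℕ, RecursiveInOracle O f ∧ ∀ n, n ∈ S ↔ (f n).Dom

/-- The `e`-th c.e. set. -/
def W (e : ℕ) : Set ℕ := {n | ((Denumerable.ofNat Nat.Partrec.Code e).eval n).Dom}

/-- The halting problem `∅'`. -/
def K0 : Set ℕ := {n | ((Denumerable.ofNat Nat.Partrec.Code n.unpair.1).eval n.unpair.2).Dom}

/-- `C` is cohesive: it is infinite and no c.e. set splits it into two infinite pieces. -/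
def Cohesive (C : Set ℕ) : Prop :=
  C.Infinite ∧ ∀ e : ℕ, (W e ∩ C).Finite ∨ ((W e)ᶜ ∩ C).Finite

/-- `S` is `Π⁰₁`-immune: it is infinite and contains no infinite co-c.e. subset. -/
def Pi01Immune (S : Set ℕ) : Prop :=
  S.Infinite ∧ ∀ e : ℕ, (W e)ᶜ ⊆ S → ((W e)ᶜ).Finite

/-!
If `C` is itself `Π⁰₁`-immune, take `D = C`. Otherwise `C` contains an infinite `Π⁰₁` set
`(W e)ᶜ`, and cohesiveness makes `W e ∩ C` finite, so `Cᶜ = W e \ F` is c.e. Using `C` as an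
oracle, pick `d₀ < d₁ < ⋯` in `C`, leaving out an element of `C` between consecutive terms and
taking `dₓ₊₁` beyond the stage at which the enumeration of `Cᶜ` has settled on `x`. Then
`D = {dₙ}` is computable from `C`, and `x ∈ C` iff `x` is not enumerated into `Cᶜ` by stage
`dₓ₊₁`, so `C` is computable from `D`. Finally, if `(W e')ᶜ ⊆ D`, then `W e'` contains the
infinite set `C \ D`, so by cohesiveness `(W e')ᶜ = (W e')ᶜ ∩ C` is finite.
-/

namespace RecursiveInOracle

variable {O : ℕ →. ℕ}

theorem of_eq {f g : ℕ →. ℕ} (hf : RecursiveInOracle O f) (h : ∀ n, f n = g n) :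
    RecursiveInOracle O g :=
  funext h ▸ hf

theorem of_partrec {f : ℕ →. ℕ} (hf : Nat.Partrec f) : RecursiveInOracle O f := by
  induction hf with
  | zero => exact .zero
  | succ => exact .succ
  | left => exact .left
  | right => exact .right
  | pair _ _ ihf ihg => exact .pair ihf ihg
  | comp _ _ ihf ihg => exact .comp ihf ihg
  | prec _ _ ihf ihg => exact .prec ihf ihg
  | rfind _ ihf => exact .rfind ihf

end RecursiveInOracle

namespace ComputableInOracle

variable {O : ℕ →. ℕ} {f g : ℕ → ℕ}

theorem of_eq (hf : ComputableInOracle O f) (h : ∀ n, f n = g n) : ComputableInOracle O g :=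
  RecursiveInOracle.of_eq hf fun n => by rw [h]

theorem of_primrec (hf : Primrec f) : ComputableInOracle O f :=
  RecursiveInOracle.of_partrec (Nat.Partrec.of_primrec (Primrec.nat_iff.1 hf))

theorem const (m : ℕ) : ComputableInOracle O fun _ => m :=
  of_primrec (Primrec.const m)

protected theorem comp (hf : ComputableInOracle O f) (hg : ComputableInOracle O g) :
    ComputableInOracle O fun n => f (g n) :=
  (RecursiveInOracle.comp hf hg).of_eq fun n => by simp

theorem comp₂ {h : ℕ → ℕ → ℕ} (hh : Primrec₂ h) (hf : ComputableInOracle O f)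
    (hg : ComputableInOracle O g) : ComputableInOracle O fun n => h (f n) (g n) :=
  ((of_primrec (hh.comp (Primrec.fst.comp Primrec.unpair) (Primrec.snd.comp Primrec.unpair))).comp
    ((RecursiveInOracle.pair hf hg).of_eq fun n => by simp [Seq.seq] :
      ComputableInOracle O fun n => Nat.pair (f n) (g n))).of_eq fun n => by simp

theorem of_succ_eq {u : ℕ → ℕ} (hg : ComputableInOracle O g)
    (hu : ∀ n, u (n + 1) = g (Nat.pair n (u n))) : ComputableInOracle O u := by
  have hg' : ComputableInOracle O fun t => g t.unpair.2 :=
    hg.comp (of_primrec (Primrec.snd.comp Primrec.unpair))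
  have hrec : ComputableInOracle O fun p => u p.unpair.2 :=
    (RecursiveInOracle.prec (const (u 0)) hg').of_eq fun p => by
      simp only [Nat.unpaired, Nat.unpair_pair, Part.bind_eq_bind]
      induction p.unpair.2 with
      | zero => rfl
      | succ n ih => simp [ih, hu]
  exact (hrec.comp (of_primrec (Primrec₂.natPair.comp (Primrec.const 0) Primrec.id))).of_eq
    fun n => by simp

protected theorem sInf {T : ℕ → Set ℕ} (hf : ComputableInOracle O f)
    (hT : ∀ a, (T a).Nonempty) (hfT : ∀ a m, f (Nat.pair a m) = 0 ↔ m ∈ T a) :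
    ComputableInOracle O fun a => sInf (T a) :=
  (RecursiveInOracle.rfind hf).of_eq fun a => by
    refine Part.eq_some_iff.2 (Nat.mem_rfind.2 ⟨?_, fun hm => ?_⟩)
    · simpa [hfT] using Nat.sInf_mem (hT a)
    · simpa [hfT] using Nat.notMem_of_lt_sInf hm

end ComputableInOracle

open Classical in
noncomputable def charFn (A : Set ℕ) (n : ℕ) : ℕ := if n ∈ A then 1 else 0

theorem one_sub_charFn_eq_zero_iff {A : Set ℕ} {n : ℕ} : 1 - charFn A n = 0 ↔ n ∈ A := by
  by_cases h : n ∈ A <;> simp [charFn, h]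

theorem computableInOracle_chi_charFn (A : Set ℕ) : ComputableInOracle (chi A) (charFn A) :=
  RecursiveInOracle.oracle

theorem turingRed_of_eq_zero_iff {A B : Set ℕ} {f : ℕ → ℕ}
    (hf : ComputableInOracle (chi B) f) (h : ∀ n, f n = 0 ↔ n ∈ A) : TuringRed A B :=
  show ComputableInOracle (chi B) (charFn A) from
    (ComputableInOracle.comp₂ Primrec.nat_sub (.const 1) hf).of_eq fun n => by
      by_cases hn : n ∈ A
      · simp [charFn, hn, (h n).2 hn]
      · have : f n ≠ 0 := fun h0 => hn ((h n).1 h0)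
        simp [charFn, hn]
        omega

/-- Junk value `0` when `A` has no element above `y`. -/
noncomputable def nextMem (A : Set ℕ) (y : ℕ) : ℕ := sInf {m | m ∈ A ∧ y < m}

section nextMem

variable {A : Set ℕ}

theorem nextMem_mem_and_lt (hA : A.Infinite) (y : ℕ) : nextMem A y ∈ A ∧ y < nextMem A y :=
  Nat.sInf_mem (hA.exists_gt y)

theorem nextMem_mem (hA : A.Infinite) (y : ℕ) : nextMem A y ∈ A :=
  (nextMem_mem_and_lt hA y).1

theorem lt_nextMem (hA : A.Infinite) (y : ℕ) : y < nextMem A y :=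
  (nextMem_mem_and_lt hA y).2

theorem nextMem_le {y z : ℕ} (hz : z ∈ A) (hyz : y < z) : nextMem A y ≤ z :=
  Nat.sInf_le ⟨hz, hyz⟩

theorem ComputableInOracle.nextMem (hA : A.Infinite) : ComputableInOracle (chi A) (nextMem A) :=
  ComputableInOracle.sInf
    (f := fun q => (1 - charFn A q.unpair.2) + (q.unpair.1 + 1 - q.unpair.2))
    (ComputableInOracle.comp₂ Primrec.nat_add
      (ComputableInOracle.comp₂ Primrec.nat_sub (.const 1)
        ((computableInOracle_chi_charFn A).comp (.of_primrec (Primrec.snd.comp Primrec.unpair))))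
      (.of_primrec (Primrec.nat_sub.comp (Primrec.succ.comp (Primrec.fst.comp Primrec.unpair))
        (Primrec.snd.comp Primrec.unpair))))
    hA.exists_gt
    fun y m => by
      simp only [Nat.unpair_pair, Nat.add_eq_zero_iff, one_sub_charFn_eq_zero_iff]
      exact and_congr_right' Nat.sub_eq_zero_iff_le

end nextMem

section StrictMono

variable {d : ℕ → ℕ}

theorem StrictMono.nextMem_range (hd : StrictMono d) (n : ℕ) :
    nextMem (Set.range d) (d n) = d (n + 1) := by
  have hinf : (Set.range d).Infinite := Set.infinite_range_of_injective hd.injective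
  obtain ⟨k, hk⟩ := nextMem_mem hinf (d n)
  have hnk : n < k := hd.lt_iff_lt.1 (hk ▸ lt_nextMem hinf (d n))
  exact le_antisymm (nextMem_le ⟨n + 1, rfl⟩ (hd (Nat.lt_succ_self n)))
    (hk ▸ hd.monotone hnk)

theorem StrictMono.computableInOracle_chi_range (hd : StrictMono d) :
    ComputableInOracle (chi (Set.range d)) d :=
  ComputableInOracle.of_succ_eq
    ((ComputableInOracle.nextMem (Set.infinite_range_of_injective hd.injective)).comp
      (.of_primrec (Primrec.snd.comp Primrec.unpair)))
    fun n => by simp [hd.nextMem_range]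

theorem StrictMono.mem_range_iff_sInf (hd : StrictMono d) (x : ℕ) :
    x ∈ Set.range d ↔ d (sInf {k | x ≤ d k}) ≤ x := by
  constructor
  · rintro ⟨k, rfl⟩
    exact hd.monotone (Nat.sInf_le (Set.mem_ofPred.2 le_rfl))
  · intro h
    exact ⟨_, le_antisymm h (Nat.sInf_mem (s := {k | x ≤ d k}) ⟨x, hd.le_apply⟩)⟩

theorem StrictMono.turingRed_range (hd : StrictMono d) {B : Set ℕ}
    (hc : ComputableInOracle (chi B) d) : TuringRed (Set.range d) B := by
  have hsearch : ComputableInOracle (chi B) fun x => sInf {k | x ≤ d k} :=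
    ComputableInOracle.sInf (f := fun q => q.unpair.1 - d q.unpair.2)
      (ComputableInOracle.comp₂ Primrec.nat_sub (.of_primrec (Primrec.fst.comp Primrec.unpair))
        (hc.comp (.of_primrec (Primrec.snd.comp Primrec.unpair))))
      (fun x => ⟨x, hd.le_apply⟩) (fun x k => by simp [Nat.sub_eq_zero_iff_le])
  exact turingRed_of_eq_zero_iff
    (ComputableInOracle.comp₂ Primrec.nat_sub (hc.comp hsearch) (.of_primrec Primrec.id))
    fun x => by simp [hd.mem_range_iff_sInf, Nat.sub_eq_zero_iff_le]

end StrictMono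

/-- A primitive recursive stagewise enumeration of `S`: `enum s x` says that `x` has appeared by
stage `s`. -/
structure Enumeration (S : Set ℕ) where
  enum : ℕ → ℕ → Bool
  primrec : Primrec₂ enum
  mono : ∀ {s t x}, s ≤ t → enum s x → enum t x
  mem_iff : ∀ x, x ∈ S ↔ ∃ s, enum s x

namespace Enumeration

open Nat.Partrec (Code)

noncomputable def ofW (e : ℕ) : Enumeration (W e) where
  enum s x := (Code.evaln s (Denumerable.ofNat Code e) x).isSome
  primrec := Primrec.option_isSome.comp (Code.primrec_evaln.comp
    (Primrec.pair (Primrec.pair Primrec.fst (Primrec.const _)) Primrec.snd))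
  mono hst h := by
    obtain ⟨a, ha⟩ := Option.isSome_iff_exists.1 h
    exact Option.isSome_iff_exists.2 ⟨a, Code.evaln_mono hst ha⟩
  mem_iff x := by
    simp only [W, Set.mem_ofPred_eq, Part.dom_iff_mem, Code.evaln_complete,
      Option.isSome_iff_exists]
    exact ⟨fun ⟨a, s, h⟩ => ⟨s, a, h⟩, fun ⟨s, a, h⟩ => ⟨a, s, h⟩⟩

def sdiff {S : Set ℕ} (A : Enumeration S) (F : Finset ℕ) : Enumeration (S \ F) where
  enum s x := A.enum s x && !decide (x ∈ F)
  primrec := by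
    have hF : PrimrecPred fun x : ℕ => x ∈ F :=
      ((PrimrecRel.exists_mem_list Primrec.eq).comp (Primrec.const F.toList) Primrec.id).of_eq
        fun x => by simp
    exact Primrec.and.comp A.primrec (Primrec.not.comp (hF.decide.comp Primrec.snd))
  mono hst h := by
    simp only [Bool.and_eq_true] at h ⊢
    exact ⟨A.mono hst h.1, h.2⟩
  mem_iff x := by simp [A.mem_iff]

section Sparse

variable {C : Set ℕ} (A : Enumeration Cᶜ)

noncomputable def settle (x : ℕ) : ℕ := sInf {s | x ∉ C → A.enum s x}

theorem settle_nonempty (x : ℕ) : {s | x ∉ C → A.enum s x}.Nonempty := by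
  by_cases hxC : x ∈ C
  · exact ⟨0, fun h => absurd hxC h⟩
  · obtain ⟨s, hs⟩ := (A.mem_iff x).1 hxC
    exact ⟨s, fun _ => hs⟩

theorem enum_iff_of_settle_le {s x : ℕ} (hs : A.settle x ≤ s) : A.enum s x ↔ x ∉ C := by
  refine ⟨fun h => (A.mem_iff x).2 ⟨s, h⟩, fun hx => A.mono hs ?_⟩
  exact Nat.sInf_mem (A.settle_nonempty x) hx

theorem computableInOracle_settle : ComputableInOracle (chi C) A.settle := by
  have henum : Primrec fun q : ℕ => bif A.enum q.unpair.2 q.unpair.1 then 0 else 1 :=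
    Primrec.cond
      (A.primrec.comp (Primrec.snd.comp Primrec.unpair) (Primrec.fst.comp Primrec.unpair))
      (Primrec.const 0) (Primrec.const 1)
  refine ComputableInOracle.sInf
    (f := fun q => (1 - charFn C q.unpair.1) * bif A.enum q.unpair.2 q.unpair.1 then 0 else 1)
    (ComputableInOracle.comp₂ Primrec.nat_mul
      (ComputableInOracle.comp₂ Primrec.nat_sub (.const 1)
        ((computableInOracle_chi_charFn C).comp (.of_primrec (Primrec.fst.comp Primrec.unpair))))
      (.of_primrec henum)) A.settle_nonempty fun x s => ?_
  simp only [Nat.unpair_pair, Nat.mul_eq_zero, one_sub_charFn_eq_zero_iff]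
  by_cases h : A.enum s x <;> simp [h]

/-- An increasing sequence in `C` whose `(n + 1)`-st term lies beyond the settling stage of `n`,
with an element of `C` left out between consecutive terms. -/
noncomputable def sparse : ℕ → ℕ
  | 0 => nextMem C 0
  | n + 1 => nextMem C (nextMem C (max (sparse n) (A.settle n)))

noncomputable def skipped (n : ℕ) : ℕ := nextMem C (max (A.sparse n) (A.settle n))

theorem sparse_mem (hC : C.Infinite) (n : ℕ) : A.sparse n ∈ C := by
  cases n <;> exact nextMem_mem hC _

theorem sparse_lt_skipped (hC : C.Infinite) (n : ℕ) : A.sparse n < A.skipped n :=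
  (le_max_left _ _).trans_lt (lt_nextMem hC _)

theorem skipped_lt_sparse_succ (hC : C.Infinite) (n : ℕ) : A.skipped n < A.sparse (n + 1) :=
  lt_nextMem hC _

theorem settle_lt_sparse_succ (hC : C.Infinite) (n : ℕ) : A.settle n < A.sparse (n + 1) :=
  ((le_max_right _ _).trans_lt (lt_nextMem hC _)).trans (A.skipped_lt_sparse_succ hC n)

theorem strictMono_sparse (hC : C.Infinite) : StrictMono A.sparse :=
  strictMono_nat_of_lt_succ fun n =>
    (A.sparse_lt_skipped hC n).trans (A.skipped_lt_sparse_succ hC n)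

theorem skipped_mem_diff (hC : C.Infinite) (n : ℕ) : A.skipped n ∈ C \ Set.range A.sparse := by
  refine ⟨nextMem_mem hC _, ?_⟩
  rintro ⟨k, hk⟩
  have hmono := A.strictMono_sparse hC
  have h₁ : n < k := hmono.lt_iff_lt.1 (hk ▸ A.sparse_lt_skipped hC n)
  have h₂ : k < n + 1 := hmono.lt_iff_lt.1 (hk ▸ A.skipped_lt_sparse_succ hC n)
  omega

theorem infinite_diff_range_sparse (hC : C.Infinite) : (C \ Set.range A.sparse).Infinite :=
  Set.infinite_of_injective_forall_mem
    (strictMono_nat_of_lt_succ fun n =>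
      (A.skipped_lt_sparse_succ hC n).trans (A.sparse_lt_skipped hC (n + 1))).injective
    (A.skipped_mem_diff hC)

theorem computableInOracle_sparse (hC : C.Infinite) : ComputableInOracle (chi C) A.sparse := by
  have hnext := ComputableInOracle.nextMem hC
  refine ComputableInOracle.of_succ_eq (g := fun t =>
      nextMem C (nextMem C (max t.unpair.2 (A.settle t.unpair.1))))
    (hnext.comp (hnext.comp (ComputableInOracle.comp₂ Primrec.nat_max
      (.of_primrec (Primrec.snd.comp Primrec.unpair))
      (A.computableInOracle_settle.comp (.of_primrec (Primrec.fst.comp Primrec.unpair))))))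
    fun n => by simp [sparse]

theorem turingRed_range_sparse (hC : C.Infinite) : TuringRed C (Set.range A.sparse) := by
  have hsparse := (A.strictMono_sparse hC).computableInOracle_chi_range
  refine turingRed_of_eq_zero_iff (f := fun x => bif A.enum (A.sparse (x + 1)) x then 1 else 0)
    (ComputableInOracle.comp₂ (h := fun s x => bif A.enum s x then 1 else 0)
      (Primrec.cond A.primrec (Primrec.const 1) (Primrec.const 0))
      (hsparse.comp (.of_primrec Primrec.succ)) (.of_primrec Primrec.id)) fun x => ?_
  have h := A.enum_iff_of_settle_le (A.settle_lt_sparse_succ hC x).le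
  by_cases hx : A.enum (A.sparse (x + 1)) x <;> simp_all

end Sparse

end Enumeration

theorem exists_subset_turingEquiv_of_enumeration_compl {C : Set ℕ} (hC : C.Infinite)
    (A : Enumeration Cᶜ) :
    ∃ D ⊆ C, D.Infinite ∧ (C \ D).Infinite ∧ TuringRed D C ∧ TuringRed C D :=
  ⟨Set.range A.sparse, Set.range_subset_iff.2 (A.sparse_mem hC),
    Set.infinite_range_of_injective (A.strictMono_sparse hC).injective,
    A.infinite_diff_range_sparse hC,
    (A.strictMono_sparse hC).turingRed_range (A.computableInOracle_sparse hC),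
    A.turingRed_range_sparse hC⟩

theorem Cohesive.pi01Immune_of_subset {C D : Set ℕ} (hC : Cohesive C) (hDC : D ⊆ C)
    (hD : D.Infinite) (hCD : (C \ D).Infinite) : Pi01Immune D := by
  refine ⟨hD, fun e he => (hC.2 e).elim (fun hW => ?_) (fun hWc => ?_)⟩
  · exact absurd (hW.subset fun x hx => ⟨by_contra fun hxW => hx.2 (he hxW), hx.1⟩) hCD
  · rwa [Set.inter_eq_left.2 (he.trans hDC)] at hWc

/-- Every cohesive set `C` has a `Π⁰₁`-immune subset `D ≡_T C`. -/
theorem cohesive_has_pi01immune_subset (C : Set ℕ) (hC : Cohesive C) :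
    ∃ D : Set ℕ, D ⊆ C ∧ Pi01Immune D ∧ TuringRed D C ∧ TuringRed C D := by
  by_cases hCimm : Pi01Immune C
  · exact ⟨C, subset_rfl, hCimm, .oracle, .oracle⟩
  obtain ⟨e, hsub, hinf⟩ : ∃ e, (W e)ᶜ ⊆ C ∧ ((W e)ᶜ).Infinite := by
    simpa [Pi01Immune, hC.1] using hCimm
  have hfin : (W e ∩ C).Finite :=
    (hC.2 e).resolve_right (by rwa [Set.inter_eq_left.2 hsub])
  have hCc : Cᶜ = W e \ hfin.toFinset := by
    rw [hfin.coe_toFinset, Set.sdiff_self_inter]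
    exact (Set.sdiff_eq_compl_inter.trans
      (Set.inter_eq_left.2 (Set.compl_subset_comm.1 hsub))).symm
  obtain ⟨D, hDC, hD, hCD, hDred, hCred⟩ := exists_subset_turingEquiv_of_enumeration_compl hC.1
    (hCc ▸ (Enumeration.ofW e).sdiff hfin.toFinset)
  exact ⟨D, hDC, hC.pi01Immune_of_subset hDC hD hCD, hDred, hCred⟩
end
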